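/- Let k be a field, R a unital associative k-algebra generated as a k-algebra by elements x₁,…,xₙ (for example, a PBW algebra), s ≥ 1, and f₁,…,f_t ∈ R^s. Let b₁,…,b_{t+sn} ∈ (R^env)^s be the list f₁⊗1,…,f_t⊗1 followed by the sn elements xⱼe_k⊗1 − 1⊗xⱼe_k (1 ≤ j ≤ n, 1 ≤ k ≤ s), where e_k is the k-th standard basis vector of R^s. If h₁,…,h_r ∈ (R^env)^{t+sn} generate Syz^l(b₁,…,b_{t+sn}) as a left R^env-module, then Syz(f₁,…,f_t) is the left R^env-submodule (equivalently, R-sub-bimodule) of (R^env)^t generated by π(h₁),…,π(h_r), where π : (R^env)^{t+sn} → (R^env)^t is the projection onto the first t coordinates. -/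

import Mathlib

open TensorProduct MulOpposite

set_option synthInstance.maxHeartbeats 1000000
set_option maxHeartbeats 1000000

noncomputable section

/-- An admissible order on a commutative monoid of exponents: a total order for which `0`
is smallest and which is compatible with addition. -/
def IsAdmissible {E : Type*} [AddCommMonoid E] (le : E → E → Prop) : Prop :=
  (∀ a b, le a b ∨ le b a) ∧
  (∀ a b, le a b → le b a → a = b) ∧
  (∀ a b c, le a b → le b c → le a c) ∧
  (∀ a, le 0 a) ∧
  (∀ a b c, le a b → le (a + c) (b + c))

/-- The strict part of an order. -/
def ltOf {E : Type*} (le : E → E → Prop) (a b : E) : Prop := le a b ∧ a ≠ b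

/-- `α^op`: the reversal of a multi-exponent. -/
def expRev {n : ℕ} (α : Fin n → ℕ) : Fin n → ℕ := fun i => α i.rev

/-- The order `⪯^op` on exponents: `α ⪯^op β ↔ α^op ⪯ β^op`. -/
def opOrd {n : ℕ} (le : (Fin n → ℕ) → (Fin n → ℕ) → Prop) :
    (Fin n → ℕ) → (Fin n → ℕ) → Prop := fun a b => le (expRev a) (expRev b)

/-- The up-component composition order `⪯^c` on `ℕⁿ × ℕⁿ`. -/
def upCompOrd {n : ℕ} (le : (Fin n → ℕ) → (Fin n → ℕ) → Prop) :
    ((Fin n → ℕ) × (Fin n → ℕ)) → ((Fin n → ℕ) × (Fin n → ℕ)) → Prop := fun a b =>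
  a = b ∨ ltOf le (a.1 + expRev a.2) (b.1 + expRev b.2) ∨
    (a.1 + expRev a.2 = b.1 + expRev b.2 ∧ ltOf le (expRev a.2) (expRev b.2))

/-- The down-component composition order `⪯_c` on `ℕⁿ × ℕⁿ`. -/
def downCompOrd {n : ℕ} (le : (Fin n → ℕ) → (Fin n → ℕ) → Prop) :
    ((Fin n → ℕ) × (Fin n → ℕ)) → ((Fin n → ℕ) × (Fin n → ℕ)) → Prop := fun a b =>
  a = b ∨ ltOf le (a.1 + expRev a.2) (b.1 + expRev b.2) ∨
    (a.1 + expRev a.2 = b.1 + expRev b.2 ∧ ltOf le a.1 b.1)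

/-- The elimination order `⪯*` on `ℕⁿ × ℕⁿ` built from `⪯` and `⪯^op`. -/
def elimUpOrd {n : ℕ} (le : (Fin n → ℕ) → (Fin n → ℕ) → Prop) :
    ((Fin n → ℕ) × (Fin n → ℕ)) → ((Fin n → ℕ) × (Fin n → ℕ)) → Prop := fun a b =>
  a = b ∨ ltOf le a.1 b.1 ∨ (a.1 = b.1 ∧ ltOf (opOrd le) a.2 b.2)

/-- The elimination order `⪯_*` on `ℕⁿ × ℕⁿ` built from `⪯` and `⪯^op`. -/
def elimDownOrd {n : ℕ} (le : (Fin n → ℕ) → (Fin n → ℕ) → Prop) :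
    ((Fin n → ℕ) × (Fin n → ℕ)) → ((Fin n → ℕ) × (Fin n → ℕ)) → Prop := fun a b =>
  a = b ∨ ltOf (opOrd le) a.2 b.2 ∨ (a.2 = b.2 ∧ ltOf le a.1 b.1)

/-- The strict TOP (term over position) order on `I × Fin m` built from a strict order on `I`. -/
def topLt {I : Type*} {m : ℕ} (lt : I → I → Prop) (a b : I × Fin m) : Prop :=
  lt a.1 b.1 ∨ (a.1 = b.1 ∧ b.2 < a.2)

/-- The strict POT (position over term) order on `I × Fin m` built from a strict order on `I`. -/
def potLt {I : Type*} {m : ℕ} (lt : I → I → Prop) (a b : I × Fin m) : Prop :=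
  b.2 < a.2 ∨ (a.2 = b.2 ∧ lt a.1 b.1)

/-- The standard monomial `x^α = x₁^{α₁} ⋯ xₙ^{αₙ}` (ordered product). -/
def stdMon {n : ℕ} {A : Type*} [Monoid A] (x : Fin n → A) (α : Fin n → ℕ) : A :=
  ((List.finRange n).map fun i => x i ^ α i).prod

/-- The quantum relation `xⱼxᵢ − qᵢⱼ xᵢxⱼ − pᵢⱼ` (for `i < j`) as an element of the free
algebra; here `pᵢⱼ` is recorded by its coefficients on standard monomials. -/
def quantumRel (k : Type*) [Field k] {n : ℕ} (q : Fin n → Fin n → k)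
    (p : Fin n → Fin n → ((Fin n → ℕ) →₀ k)) (i j : Fin n) : FreeAlgebra k (Fin n) :=
  FreeAlgebra.ι k j * FreeAlgebra.ι k i
    - q i j • (FreeAlgebra.ι k i * FreeAlgebra.ι k j)
    - (p i j).sum fun γ c => c • stdMon (FreeAlgebra.ι k) γ

/-- `R` is the PBW algebra `k{x₁,…,xₙ; Q, ⪯}`, where the relation for `i < j` reads
`xⱼxᵢ = qᵢⱼ xᵢxⱼ + pᵢⱼ`: the order is admissible, the `q`'s are nonzero, the tails `p` are
bounded by `⪯`, the canonical map from the free algebra is surjective with kernel the two-sided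
ideal generated by the relations, and the standard monomials form a `k`-basis. -/
def IsPBW (k : Type*) [Field k] {n : ℕ} (R : Type*) [Ring R] [Algebra k R]
    (x : Fin n → R) (q : Fin n → Fin n → k) (p : Fin n → Fin n → ((Fin n → ℕ) →₀ k))
    (le : (Fin n → ℕ) → (Fin n → ℕ) → Prop) : Prop :=
  IsAdmissible le ∧
  (∀ i j : Fin n, i < j → q i j ≠ 0) ∧
  (∀ i j : Fin n, i < j → ∀ γ ∈ (p i j).support,
      ltOf le γ (Pi.single i 1 + Pi.single j 1)) ∧
  Function.Surjective (FreeAlgebra.lift k x) ∧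
  (∀ a : FreeAlgebra k (Fin n),
      FreeAlgebra.lift k x a = 0 ↔
        a ∈ TwoSidedIdeal.span {y | ∃ i j : Fin n, i < j ∧ y = quantumRel k q p i j}) ∧
  LinearIndependent k (stdMon x) ∧
  Submodule.span k (Set.range (stdMon x)) = ⊤

section Env

variable {k R : Type*} [Field k] [Ring R] [Algebra k R]

/-- The left `R^env = R ⊗[k] Rᵐᵒᵖ`-module structure on `R`, given by
`(r ⊗ r') • f = r * f * r'`. -/
noncomputable instance (priority := 100) envModule : Module (R ⊗[k] Rᵐᵒᵖ) R :=
  TensorProduct.Algebra.module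

/-- The multiplication map `𝔪 : R^env → R`, `r ⊗ r' ↦ r r'`, as a morphism of left
`R^env`-modules. -/
noncomputable def mulE (k R : Type*) [Field k] [Ring R] [Algebra k R] :
    (R ⊗[k] Rᵐᵒᵖ) →ₗ[R ⊗[k] Rᵐᵒᵖ] R :=
  LinearMap.toSpanSingleton _ _ (1 : R)

/-- The map `𝔪^s : (R^env)^s → R^s` applying `𝔪` coordinatewise, as a morphism of left
`R^env`-modules. -/
noncomputable def mulS (k R : Type*) [Field k] [Ring R] [Algebra k R] (s : ℕ) :
    (Fin s → R ⊗[k] Rᵐᵒᵖ) →ₗ[R ⊗[k] Rᵐᵒᵖ] (Fin s → R) :=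
  LinearMap.pi fun i => (mulE k R).comp (LinearMap.proj i)

/-- `f ⊗ 1 := (f₁ ⊗ 1, …, f_s ⊗ 1)`. -/
def tensorOne (k : Type*) [Field k] {R : Type*} [Ring R] [Algebra k R] {s : ℕ}
    (f : Fin s → R) : Fin s → R ⊗[k] Rᵐᵒᵖ := fun i => f i ⊗ₜ[k] (1 : Rᵐᵒᵖ)

/-- `1 ⊗ f := (1 ⊗ f₁, …, 1 ⊗ f_s)`. -/
def oneTensor (k : Type*) [Field k] {R : Type*} [Ring R] [Algebra k R] {s : ℕ}
    (f : Fin s → R) : Fin s → R ⊗[k] Rᵐᵒᵖ := fun i => (1 : R) ⊗ₜ[k] op (f i)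

/-- The map `(h₁,…,h_m) ↦ Σᵢ hᵢ • wᵢ`, whose kernel is the (two-sided/left) syzygy module
of the family `w`. -/
noncomputable def syzMap (A : Type*) [Ring A] {M : Type*} [AddCommGroup M] [Module A M]
    {ι : Type*} [Fintype ι] (w : ι → M) : (ι → A) →ₗ[A] M where
  toFun h := ∑ l, h l • w l
  map_add' h h' := by simp [add_smul, Finset.sum_add_distrib]
  map_smul' a h := by simp [mul_smul, Finset.smul_sum]

end Env

/-- `e` is the exponent (leading index) of the nonzero element `h` of a free module of rank `m`
over an algebra with a standard-monomial basis `b` indexed by `I`, with respect to a strict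
order `lt` on `I × Fin m`: the coordinate of `h` at `e` is nonzero and every other index with
nonzero coordinate is smaller. -/
def IsExpOf {k R0 I : Type*} [Field k] [AddCommGroup R0] [Module k R0] {m : ℕ}
    (b : Module.Basis I k R0) (lt : I × Fin m → I × Fin m → Prop)
    (h : Fin m → R0) (e : I × Fin m) : Prop :=
  b.repr (h e.2) e.1 ≠ 0 ∧ ∀ β i, b.repr (h i) β ≠ 0 → (β, i) = e ∨ lt ((β, i)) e

/-- `G` is a Gröbner basis of the `A`-submodule `N` of the free module `(Fin m → R0)`:
`G ⊆ N \ {0}`, `G` generates `N` over `A`, and the leading exponent of every nonzero element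
of `N` is a translate (by some `δ`) of the leading exponent of some element of `G`, in the
same component.  Taking `A = R^env` acting on `R0 = R^env` gives left Gröbner bases, and
taking `A = R^env` acting on `R0 = R` gives two-sided Gröbner bases. -/
def IsGB {k R0 A I : Type*} [Field k] [AddCommGroup R0] [Module k R0] [Ring A] [Add I]
    {m : ℕ} [Module A (Fin m → R0)]
    (b : Module.Basis I k R0) (lt : I × Fin m → I × Fin m → Prop)
    (N : Submodule A (Fin m → R0)) (G : Set (Fin m → R0)) : Prop :=
  G ⊆ (N : Set (Fin m → R0)) \ {0} ∧ Submodule.span A G = N ∧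
  ∀ h, h ∈ N → h ≠ 0 →
    ∃ g ∈ G, ∃ γ δ i, IsExpOf b lt g (γ, i) ∧ IsExpOf b lt h (γ + δ, i)

end


section AuxProof

variable {k R : Type*} [Field k] [Ring R] [Algebra k R]

lemma env_smul_def' (r r' m : R) : (r ⊗ₜ[k] (op r')) • m = r * (m * r') := rfl

lemma mulE_tmul (r r' : R) : mulE k R (r ⊗ₜ[k] (op r')) = r * r' := by
  rw [mulE, LinearMap.toSpanSingleton_apply, env_smul_def', one_mul]

lemma mulE_tmul_one (r : R) : mulE k R (r ⊗ₜ[k] (1 : Rᵐᵒᵖ)) = r := by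
  have : (1 : Rᵐᵒᵖ) = op (1 : R) := rfl
  rw [this, mulE_tmul, mul_one]

lemma mulE_one_tmul (r : R) : mulE k R ((1 : R) ⊗ₜ[k] op r) = r := by
  rw [mulE_tmul, one_mul]

variable {n : ℕ} (x : Fin n → R)

/-- The set of generators `xⱼ ⊗ 1 − 1 ⊗ xⱼ` of the kernel of `𝔪`. -/
local notation "Ω" => Set.range fun j : Fin n =>
  x j ⊗ₜ[k] (1 : Rᵐᵒᵖ) - (1 : R) ⊗ₜ[k] op (x j)

lemma diff_mem_span (hgen : Algebra.adjoin k (Set.range x) = ⊤) (r : R) :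
    r ⊗ₜ[k] (1 : Rᵐᵒᵖ) - (1 : R) ⊗ₜ[k] op r ∈ Submodule.span (R ⊗[k] Rᵐᵒᵖ) Ω := by
  have hr : r ∈ Algebra.adjoin k (Set.range x) := hgen ▸ trivial
  induction hr using Algebra.adjoin_induction with
  | mem y hy =>
      obtain ⟨j, rfl⟩ := hy
      exact Submodule.subset_span ⟨j, rfl⟩
  | algebraMap c =>
      have : (algebraMap k R c) ⊗ₜ[k] (1 : Rᵐᵒᵖ) - (1 : R) ⊗ₜ[k] op (algebraMap k R c)
          = 0 := by
        rw [Algebra.algebraMap_eq_smul_one]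
        rw [show op (c • (1:R)) = c • (1 : Rᵐᵒᵖ) from rfl]
        rw [← smul_tmul', tmul_smul, sub_self]
      rw [this]; exact Submodule.zero_mem _
  | add y z hy hz ihy ihz =>
      have : (y + z) ⊗ₜ[k] (1 : Rᵐᵒᵖ) - (1 : R) ⊗ₜ[k] op (y + z)
          = (y ⊗ₜ[k] (1 : Rᵐᵒᵖ) - (1 : R) ⊗ₜ[k] op y)
            + (z ⊗ₜ[k] (1 : Rᵐᵒᵖ) - (1 : R) ⊗ₜ[k] op z) := by
        rw [add_tmul, op_add, tmul_add]; abel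
      rw [this]; exact Submodule.add_mem _ ihy ihz
  | mul y z hy hz ihy ihz =>
      have key : (y * z) ⊗ₜ[k] (1 : Rᵐᵒᵖ) - (1 : R) ⊗ₜ[k] op (y * z)
          = (y ⊗ₜ[k] (1 : Rᵐᵒᵖ)) • (z ⊗ₜ[k] (1 : Rᵐᵒᵖ) - (1 : R) ⊗ₜ[k] op z)
            + ((1 : R) ⊗ₜ[k] op z) • (y ⊗ₜ[k] (1 : Rᵐᵒᵖ) - (1 : R) ⊗ₜ[k] op y) := by
        simp only [smul_eq_mul, mul_sub, Algebra.TensorProduct.tmul_mul_tmul,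
          mul_one, one_mul, op_mul]
        abel
      rw [key]
      exact Submodule.add_mem _ (Submodule.smul_mem _ _ ihz) (Submodule.smul_mem _ _ ihy)

lemma mem_span_of_mulE_eq_zero (hgen : Algebra.adjoin k (Set.range x) = ⊤)
    (a : R ⊗[k] Rᵐᵒᵖ) (ha : mulE k R a = 0) :
    a ∈ Submodule.span (R ⊗[k] Rᵐᵒᵖ) Ω := by
  have key : ∀ a : R ⊗[k] Rᵐᵒᵖ,
      a - (mulE k R a) ⊗ₜ[k] (1 : Rᵐᵒᵖ) ∈ Submodule.span (R ⊗[k] Rᵐᵒᵖ) Ω := by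
    intro a
    induction a with
    | zero => simp
    | tmul r y =>
        have h1 : mulE k R (r ⊗ₜ[k] y) = r * unop y := mulE_tmul (k := k) r (unop y)
        have h2 : r ⊗ₜ[k] y - (r * unop y) ⊗ₜ[k] (1 : Rᵐᵒᵖ)
            = -((r ⊗ₜ[k] (1 : Rᵐᵒᵖ)) •
                ((unop y) ⊗ₜ[k] (1 : Rᵐᵒᵖ) - (1 : R) ⊗ₜ[k] op (unop y))) := by
          simp only [smul_eq_mul, mul_sub, Algebra.TensorProduct.tmul_mul_tmul,
            mul_one, one_mul, op_unop]
          abel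
        rw [h1, h2]
        exact Submodule.neg_mem _ (Submodule.smul_mem _ _ (diff_mem_span x hgen _))
    | add a b iha ihb =>
        have : a + b - (mulE k R (a + b)) ⊗ₜ[k] (1 : Rᵐᵒᵖ)
            = (a - (mulE k R a) ⊗ₜ[k] (1 : Rᵐᵒᵖ)) + (b - (mulE k R b) ⊗ₜ[k] (1 : Rᵐᵒᵖ)) := by
          rw [map_add, add_tmul]; abel
        rw [this]; exact Submodule.add_mem _ iha ihb
  have := key a
  rw [ha, zero_tmul, sub_zero] at this
  exact this

lemma syzMap_apply' {A : Type*} [Ring A] {M : Type*} [AddCommGroup M] [Module A M]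
    {ι : Type*} [Fintype ι] (w : ι → M) (g : ι → A) :
    syzMap A w g = ∑ l, g l • w l := rfl

end AuxProof

/-- Let `R` be generated as a `k`-algebra by `x₁,…,xₙ`, and
`f₁,…,f_t ∈ R^s`.  Consider the list `b` consisting of the `fᵢ⊗1` followed by the `sn`
elements `xⱼe_c⊗1 − 1⊗xⱼe_c` of `(R^env)^s`.  If `h₁,…,h_r` generate the left syzygy module
`Syz^l(b)` (the kernel of `(g_l) ↦ Σ g_l • b_l`) as a left `R^env`-module, then the syzygy
bimodule `Syz(f₁,…,f_t)` (the kernel of `(R^env)^t → R^s`, `(g_i) ↦ Σ g_i • f_i`) is the left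
`R^env`-submodule of `(R^env)^t` generated by the projections `π(h₁),…,π(h_r)` to the first
`t` coordinates. -/
theorem syz_bimodule_eq_span_proj_leftSyz
    {k R : Type*} [Field k] [Ring R] [Algebra k R] {n s t : ℕ} (hs : 1 ≤ s)
    (x : Fin n → R) (hgen : Algebra.adjoin k (Set.range x) = ⊤)
    (f : Fin t → Fin s → R) {r : ℕ}
    (h : Fin r → ((Fin t ⊕ Fin n × Fin s) → R ⊗[k] Rᵐᵒᵖ))
    (hh : Submodule.span (R ⊗[k] Rᵐᵒᵖ) (Set.range h) =
      LinearMap.ker (syzMap (R ⊗[k] Rᵐᵒᵖ)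
        (Sum.elim (fun i => tensorOne k (f i))
          (fun jc : Fin n × Fin s =>
            tensorOne k (Pi.single jc.2 (x jc.1)) - oneTensor k (Pi.single jc.2 (x jc.1)))))) :
    LinearMap.ker (syzMap (R ⊗[k] Rᵐᵒᵖ) f) =
      Submodule.span (R ⊗[k] Rᵐᵒᵖ) (Set.range fun m => h m ∘ Sum.inl) := by
  classical
  set b : (Fin t ⊕ Fin n × Fin s) → (Fin s → R ⊗[k] Rᵐᵒᵖ) :=
    Sum.elim (fun i => tensorOne k (f i))
      (fun jc : Fin n × Fin s =>
        tensorOne k (Pi.single jc.2 (x jc.1)) - oneTensor k (Pi.single jc.2 (x jc.1)))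
    with hbdef
  have hbinl : ∀ i, b (Sum.inl i) = tensorOne k (f i) := fun i => rfl
  have hbinr : ∀ jc : Fin n × Fin s, b (Sum.inr jc)
      = Pi.single jc.2 (x jc.1 ⊗ₜ[k] (1 : Rᵐᵒᵖ) - (1 : R) ⊗ₜ[k] op (x jc.1)) := by
    rintro ⟨j, c⟩
    funext i
    simp only [hbdef, Sum.elim_inr, Pi.sub_apply, tensorOne, oneTensor, Pi.single_apply]
    split
    · rfl
    · simp
  have hmulS : ∀ v : Fin s → R ⊗[k] Rᵐᵒᵖ, ∀ i, mulS k R s v i = mulE k R (v i) :=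
    fun _ _ => rfl
  have hmulS_inl : ∀ i, mulS k R s (b (Sum.inl i)) = f i := by
    intro i; funext c
    rw [hmulS, hbinl]
    exact mulE_tmul_one (f i c)
  have hmulS_inr : ∀ jc : Fin n × Fin s, mulS k R s (b (Sum.inr jc)) = 0 := by
    intro jc; funext c
    rw [hmulS, hbinr]
    rcases eq_or_ne c jc.2 with hc | hc
    · subst hc
      simp only [Pi.single_eq_same, map_sub, mulE_tmul_one, mulE_one_tmul]
      simp
    · simp [Pi.single_eq_of_ne hc]
  have hproj : (Set.range fun m => h m ∘ Sum.inl)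
      = (LinearMap.funLeft (R ⊗[k] Rᵐᵒᵖ) (R ⊗[k] Rᵐᵒᵖ) Sum.inl) '' (Set.range h) := by
    rw [← Set.range_comp]; rfl
  rw [hproj, ← Submodule.map_span, hh]
  ext g
  simp only [Submodule.mem_map, LinearMap.mem_ker]
  constructor
  · intro hg
    set v : Fin s → R ⊗[k] Rᵐᵒᵖ := ∑ i : Fin t, g i • tensorOne k (f i) with hvdef
    have hv : ∀ c, mulE k R (v c) = 0 := by
      intro c
      have h1 : v c = ∑ i, g i • ((f i c) ⊗ₜ[k] (1 : Rᵐᵒᵖ)) := by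
        rw [hvdef]
        simp [Finset.sum_apply, tensorOne]
      have h2 : mulE k R (v c) = ∑ i, g i • (f i c) := by
        rw [h1, map_sum]
        refine Finset.sum_congr rfl fun i _ => ?_
        rw [map_smul, mulE_tmul_one]
      rw [h2]
      have h3 := congrFun hg c
      simpa [syzMap_apply', Finset.sum_apply] using h3
    have hvmem : v ∈ Submodule.span (R ⊗[k] Rᵐᵒᵖ)
        (Set.range fun jc : Fin n × Fin s => b (Sum.inr jc)) := by
      have hvsum : v = ∑ c, Pi.single c (v c) := (Finset.univ_sum_single v).symm
      rw [hvsum]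
      refine Submodule.sum_mem _ fun c _ => ?_
      have h1 := mem_span_of_mulE_eq_zero x hgen _ (hv c)
      have h2 := Submodule.mem_map_of_mem
        (f := LinearMap.single (R ⊗[k] Rᵐᵒᵖ) (fun _ : Fin s => R ⊗[k] Rᵐᵒᵖ) c) h1
      rw [Submodule.map_span] at h2
      refine Submodule.span_mono ?_ h2
      rintro _ ⟨_, ⟨j, rfl⟩, rfl⟩
      refine ⟨(j, c), ?_⟩
      show b (Sum.inr (j, c)) = Pi.single c (x j ⊗ₜ[k] (1 : Rᵐᵒᵖ) - (1 : R) ⊗ₜ[k] op (x j))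
      exact hbinr (j, c)
    obtain ⟨a, hav⟩ := (Submodule.mem_span_range_iff_exists_fun _).1 hvmem
    refine ⟨Sum.elim g fun jc => -a jc, ?_, ?_⟩
    · rw [syzMap_apply', Fintype.sum_sum_type]
      simp only [Sum.elim_inl, Sum.elim_inr, neg_smul, Finset.sum_neg_distrib]
      rw [hav]
      simp only [hbinl]
      rw [← hvdef, add_neg_cancel]
    · rfl
  · rintro ⟨g', hg', rfl⟩
    have h0 := congrArg (mulS k R s) hg'
    rw [map_zero, syzMap_apply', map_sum] at h0
    simp only [map_smul, Fintype.sum_sum_type, hmulS_inl, hmulS_inr, smul_zero,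
      Finset.sum_const_zero, add_zero] at h0
    rw [syzMap_apply']
    exact h0
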